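/- Let θ be a non-constant inner function, f ∈ L^∞, and g = g₁ + conj(g₂) with g₁, g₂ ∈ K_θ ∩ L^∞. Then V⁻¹ (H_{θ̄} T_{ḡ} H_f* − H_{ḡ} H_{θf}*) V = H_{θ̄}* H_{f g₁} + H_{θ̄g₂}* H_f − H_{ḡ₁}* H_{θf} as bounded operators on H². -/

import Mathlib

open MeasureTheory Filter Topology ComplexConjugate ENNReal

noncomputable section

namespace HTTO

instance fact2pi : Fact (0 < 2 * Real.pi) := ⟨Real.two_pi_pos⟩

/-- The unit circle, modeled additively as `ℝ / 2πℤ`; the point `x` corresponds to `e^{ix}`. -/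
abbrev Circ : Type := AddCircle (2 * Real.pi)

/-- Normalized Haar (Lebesgue) measure on the circle. -/
abbrev hm : Measure Circ := AddCircle.haarAddCircle

/-- The Lebesgue space `L²` of the circle. -/
abbrev L2 : Type := Lp ℂ 2 hm

/-- The Lebesgue space `L^∞` of the circle. -/
abbrev Linf : Type := Lp ℂ ⊤ hm

/-- The `n`-th Fourier coefficient, as a continuous linear functional on `L²`. -/
def coeffCLM (n : ℤ) : L2 →L[ℂ] ℂ :=
  LinearMap.mkContinuous
    { toFun := fun f => fourierBasis.repr f n
      map_add' := fun f g => by simp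
      map_smul' := fun c f => by simp }
    1
    (fun f => by
      rw [one_mul]
      calc ‖fourierBasis.repr f n‖ ≤ ‖fourierBasis.repr f‖ :=
            lp.norm_apply_le_norm (by norm_num) _ n
        _ = ‖f‖ := by simp)

/-- The Hardy space `H²`: the subspace of `L²` of functions whose negative Fourier
coefficients vanish. -/
def H2 : Submodule ℂ L2 := ⨅ n : {m : ℤ // m < 0}, LinearMap.ker (coeffCLM n.1 : L2 →ₗ[ℂ] ℂ)

theorem isClosed_H2 : IsClosed (H2 : Set L2) := by
  have h : ((H2 : Submodule ℂ L2) : Set L2)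
      = ⋂ n : {m : ℤ // m < 0}, ↑(LinearMap.ker (coeffCLM n.1 : L2 →ₗ[ℂ] ℂ)) := Submodule.coe_iInf _
  rw [h]
  exact isClosed_iInter fun n => ContinuousLinearMap.isClosed_ker _

instance : CompleteSpace H2 := isClosed_H2.completeSpace_coe

/-- The orthogonal (Szegő/Riesz) projection `P` of `L²` onto `H²`,
as an endomorphism of `L²`. -/
def Pp : L2 →L[ℂ] L2 := H2.subtypeL.comp (H2.orthogonalProjectionOnto)

/-- The `L²` function `f * g`, for `f ∈ L^∞` and `g ∈ L²`, is in `L²`. -/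
theorem mulMem (f : Linf) (g : L2) : MemLp (⇑f • ⇑g) 2 hm :=
  (Lp.memLp g).smul (Lp.memLp f)

/-- Pointwise multiplication `g ↦ f g` of an `L²` function by an `L^∞` function. -/
def mulFun (f : Linf) (g : L2) : L2 := (mulMem f g).toLp (⇑f • ⇑g)

theorem coeFn_mulFun (f : Linf) (g : L2) : mulFun f g =ᵐ[hm] ⇑f • ⇑g :=
  MemLp.coeFn_toLp _

theorem mulFun_add (f : Linf) (g₁ g₂ : L2) :
    mulFun f (g₁ + g₂) = mulFun f g₁ + mulFun f g₂ := by
  apply Lp.ext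
  filter_upwards [coeFn_mulFun f (g₁ + g₂), coeFn_mulFun f g₁, coeFn_mulFun f g₂,
    Lp.coeFn_add (mulFun f g₁) (mulFun f g₂), Lp.coeFn_add g₁ g₂] with x h1 h2 h3 h4 h5
  simp only [h1, h4, Pi.add_apply, h2, h3, Pi.smul_apply, h5, smul_eq_mul, Pi.mul_apply, mul_add]

theorem mulFun_smul (f : Linf) (c : ℂ) (g : L2) :
    mulFun f (c • g) = c • mulFun f g := by
  apply Lp.ext
  filter_upwards [coeFn_mulFun f (c • g), coeFn_mulFun f g,
    Lp.coeFn_smul c (mulFun f g), Lp.coeFn_smul c g] with x h1 h2 h3 h4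
  simp only [h1, h3, Pi.smul_apply, h2, h4, smul_eq_mul, Pi.mul_apply]
  ring

theorem mulFun_norm (f : Linf) (g : L2) : ‖mulFun f g‖ ≤ ‖f‖ * ‖g‖ := by
  rw [mulFun, Lp.norm_toLp]
  calc (eLpNorm (⇑f • ⇑g) 2 hm).toReal
      ≤ (eLpNorm (⇑f) ⊤ hm * eLpNorm (⇑g) 2 hm).toReal :=
        ENNReal.toReal_mono
          (ENNReal.mul_ne_top (Lp.eLpNorm_ne_top f) (Lp.eLpNorm_ne_top g))
          (eLpNorm_smul_le_eLpNorm_top_mul_eLpNorm 2 (Lp.aestronglyMeasurable g) ⇑f)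
    _ = ‖f‖ * ‖g‖ := by rw [ENNReal.toReal_mul]; rfl

/-- The multiplication operator `M_f : L² → L²`, `g ↦ f g`, for a symbol `f ∈ L^∞`. -/
def mulCL (f : Linf) : L2 →L[ℂ] L2 :=
  LinearMap.mkContinuous
    { toFun := mulFun f
      map_add' := mulFun_add f
      map_smul' := mulFun_smul f }
    ‖f‖ (mulFun_norm f)

/-- The product of two `L^∞` functions, as an element of `L^∞`. -/
def mulInf (f g : Linf) : Linf :=
  ((Lp.memLp g).smul (Lp.memLp f)).toLp (⇑f • ⇑g)

/-- The complex conjugate of an `Lᵖ` function. -/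
def conjLp {p : ℝ≥0∞} (f : Lp ℂ p hm) : Lp ℂ p hm :=
  MemLp.toLp (fun x => conj (f x))
    (MemLp.of_le (Lp.memLp f)
      (RCLike.continuous_conj.comp_aestronglyMeasurable (Lp.aestronglyMeasurable f))
      (Eventually.of_forall fun x => by simp))

/-- The embedding of `L^∞` into `L²` (the measure is finite). -/
def inclL2 (f : Linf) : L2 := MemLp.toLp ⇑f ((Lp.memLp f).mono_exponent le_top)

/-- The constant function `1` in `L^∞`. -/
def oneInf : Linf := Lp.const ⊤ hm (1 : ℂ)

/-- The constant function `1` in `L²`. -/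
def oneL2 : L2 := Lp.const 2 hm (1 : ℂ)

/-- `f ∈ L^∞` is constant (a.e.). -/
def IsConst (f : Linf) : Prop := ∃ c : ℂ, f = Lp.const ⊤ hm c

/-- `θ ∈ L^∞` is an inner function: it is analytic (i.e. lies in `H^∞ = H² ∩ L^∞`)
and has modulus `1` a.e. on the circle. -/
structure IsInner (θ : Linf) : Prop where
  analytic : inclL2 θ ∈ H2
  unimodular : ∀ᵐ x ∂hm, ‖θ x‖ = 1

/-- The complementary projection `I - P` of `L²` onto `[H²]^⊥`. -/
def Qm : L2 →L[ℂ] L2 := ContinuousLinearMap.id ℂ L2 - Pp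

/-- The Toeplitz operator `T_f h = P (f h)` with symbol `f ∈ L^∞`, realized as the
endomorphism `P M_f P` of `L²` (i.e. extended by zero on `[H²]^⊥`). -/
def toep (f : Linf) : L2 →L[ℂ] L2 := Pp ∘L mulCL f ∘L Pp

/-- The Hankel operator `H_f h = (I - P)(f h)` with symbol `f ∈ L^∞`, realized as the
operator `(I-P) M_f P` on `L²` (i.e. extended by zero on `[H²]^⊥`). -/
def hank (f : Linf) : L2 →L[ℂ] L2 := Qm ∘L mulCL f ∘L Pp

/-- The operator `S_f h = (I - P)(f h)` on `[H²]^⊥` with symbol `f ∈ L^∞`, realized as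
`(I-P) M_f (I-P)` on `L²` (i.e. extended by zero on `H²`). -/
def sop (f : Linf) : L2 →L[ℂ] L2 := Qm ∘L mulCL f ∘L Qm

/-- The rank one operator `x ⊗ y : h ↦ ⟨h, y⟩ x`. -/
def rankOne (x y : L2) : L2 →L[ℂ] L2 := (innerSL ℂ y).smulRight x

/-- The subspace `θ H²` of `L²`. -/
def thetaH2 (θ : Linf) : Submodule ℂ L2 := H2.map (mulCL θ).toLinearMap

/-- The model space `K_θ = H² ⊖ θH² = H² ∩ (θH²)^⊥`. -/
def Ktheta (θ : Linf) : Submodule ℂ L2 := H2 ⊓ (thetaH2 θ)ᗮ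

/-- The orthogonal projection `P_θ` of `L²` onto the model space `K_θ`, given by the
formula `P_θ f = P f - θ P(conj θ · f)`. -/
def Pth (θ : Linf) : L2 →L[ℂ] L2 := Pp - mulCL θ ∘L Pp ∘L mulCL (conjLp θ)

/-- The truncated Toeplitz operator `A^θ_φ u = P_θ(φ u)` with symbol `φ ∈ L²`, applied to a
bounded function `u` (in the statements, `u` ranges over `K_θ ∩ H^∞`). -/
def ttoepApply (θ : Linf) (φ : L2) (u : Linf) : L2 := Pth θ (mulCL u φ)

/-- The truncated Hankel operator `H^θ_φ u = (I - P_θ)(φ u)` with symbol `φ ∈ L²`, applied to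
a bounded function `u` (in the statements, `u` ranges over `K_θ ∩ H^∞`). -/
def thankApply (θ : Linf) (φ : L2) (u : Linf) : L2 := mulCL u φ - Pth θ (mulCL u φ)

/-- The truncated Toeplitz operator `A^θ_f = P_θ M_f P_θ` with bounded symbol `f ∈ L^∞`,
extended by zero on the orthogonal complement of `K_θ`. -/
def ttoep (θ f : Linf) : L2 →L[ℂ] L2 := Pth θ ∘L mulCL f ∘L Pth θ

/-- The truncated Hankel operator `H^θ_f = (I - P_θ) M_f P_θ` with bounded symbol `f ∈ L^∞`,
extended by zero on the orthogonal complement of `K_θ`. -/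
def thank (θ f : Linf) : L2 →L[ℂ] L2 :=
  (ContinuousLinearMap.id ℂ L2 - Pth θ) ∘L mulCL f ∘L Pth θ

/-- The antiunitary operator `V` on `L²`: `(V f)(w) = conj w * conj (f w)`. -/
def Vop (f : L2) : L2 := mulCL (fourierLp ⊤ (-1)) (conjLp f)

theorem negMP : MeasurePreserving (fun x : Circ => -x) hm hm :=
  Measure.measurePreserving_neg hm

/-- The unitary operator `U` on `L²`: `(U f)(w) = conj w * f (conj w)`. -/
def Uop (f : L2) : L2 :=
  mulCL (fourierLp ⊤ (-1)) (Lp.compMeasurePreserving (fun x : Circ => -x) negMP f)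

/-- The normalized reproducing kernel `k_z(w) = √(1-|z|²) / (1 - conj z * w)` of `H²`,
as a continuous function on the circle (`w = e^{ix}`). -/
def kC (z : ℂ) (hz : ‖z‖ < 1) : C(Circ, ℂ) :=
  ⟨fun x => (Real.sqrt (1 - ‖z‖ ^ 2) : ℂ) / (1 - conj z * fourier 1 x), by
    apply Continuous.div continuous_const
    · exact Continuous.sub continuous_const (Continuous.mul continuous_const (map_continuous _))
    · intro x
      refine sub_ne_zero.2 fun h => absurd (congrArg norm h) ?_
      have h1 : ‖fourier 1 x‖ = 1 := Circle.norm_coe _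
      simp only [norm_mul, RCLike.norm_conj, h1, mul_one, norm_one]
      exact fun hc => absurd hc.symm (ne_of_lt hz)⟩

open Classical in
/-- The normalized reproducing kernel `k_z` as an element of `L²` (junk value `0` if `|z| ≥ 1`). -/
def kLp (z : ℂ) : L2 :=
  if hz : ‖z‖ < 1 then ContinuousMap.toLp 2 hm ℂ (kC z hz) else 0

/-- The Möbius transform `φ_z(w) = (z - w)/(1 - conj z * w)`, as a continuous function. -/
def phiC (z : ℂ) (hz : ‖z‖ < 1) : C(Circ, ℂ) :=
  ⟨fun x => (z - fourier 1 x) / (1 - conj z * fourier 1 x), by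
    apply Continuous.div
    · exact Continuous.sub continuous_const (map_continuous _)
    · exact Continuous.sub continuous_const (Continuous.mul continuous_const (map_continuous _))
    · intro x
      refine sub_ne_zero.2 fun h => absurd (congrArg norm h) ?_
      have h1 : ‖fourier 1 x‖ = 1 := Circle.norm_coe _
      simp only [norm_mul, RCLike.norm_conj, h1, mul_one, norm_one]
      exact fun hc => absurd hc.symm (ne_of_lt hz)⟩

open Classical in
/-- The Möbius transform `φ_z` as an element of `L^∞` (junk value `0` if `|z| ≥ 1`). -/
def phiInf (z : ℂ) : Linf :=
  if hz : ‖z‖ < 1 then ContinuousMap.toLp ⊤ hm ℂ (phiC z hz) else 0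

/-- The filter of tangential approach `|z| → 1⁻` inside the unit disk. -/
def toBoundary : Filter ℂ := Filter.comap (fun z => ‖z‖) (𝓝[<] (1 : ℝ))

/-- Membership in `K_θ + ℂθ = {h ∈ H² : θ conj h ∈ H²}`. -/
def MemKC (θ : Linf) (h : L2) : Prop := h ∈ H2 ∧ mulCL θ (conjLp h) ∈ H2



local notation "⟪" x ", " y "⟫" => @inner ℂ _ _ x y

/-! ### Coercion lemmas -/

theorem coeFn_mulCL (f : Linf) (x : L2) :
    ⇑(mulCL f x) =ᵐ[hm] fun t => f t * x t := by
  filter_upwards [coeFn_mulFun f x] with t ht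
  show mulFun f x t = _
  simpa [smul_eq_mul] using ht

theorem coeFn_conjLp {p : ℝ≥0∞} (f : Lp ℂ p hm) :
    ⇑(conjLp f) =ᵐ[hm] fun t => conj (f t) :=
  MemLp.coeFn_toLp _

theorem coeFn_inclL2 (f : Linf) : ⇑(inclL2 f) =ᵐ[hm] ⇑f :=
  MemLp.coeFn_toLp _

theorem coeFn_mulInf (a b : Linf) : ⇑(mulInf a b) =ᵐ[hm] fun t => a t * b t := by
  filter_upwards [MemLp.coeFn_toLp (show MemLp (⇑a • ⇑b) ⊤ hm from (Lp.memLp b).smul (Lp.memLp a))] with t ht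
  show (MemLp.toLp (⇑a • ⇑b) ((Lp.memLp b).smul (Lp.memLp a)) : Linf) t = _
  simpa [smul_eq_mul] using ht

/-! ### Fourier coefficient lemmas -/

theorem fourierCoeff_congr {f g : Circ → ℂ} (h : f =ᵐ[hm] g) (n : ℤ) :
    fourierCoeff f n = fourierCoeff g n := by
  unfold fourierCoeff
  exact integral_congr_ae (by filter_upwards [h] with t ht; rw [ht])

theorem fourierCoeff_mul_fourier (f : Circ → ℂ) (k n : ℤ) :
    fourierCoeff (fun t => f t * fourier k t) n = fourierCoeff f (n - k) := by
  unfold fourierCoeff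
  apply integral_congr_ae
  apply Eventually.of_forall
  intro t
  simp only [smul_eq_mul]
  rw [show -(n - k) = -n + k by ring, fourier_add]
  ring

theorem fourierCoeff_conj (f : Circ → ℂ) (n : ℤ) :
    fourierCoeff (fun t => conj (f t)) n = conj (fourierCoeff f (-n)) := by
  unfold fourierCoeff
  rw [← integral_conj]
  apply integral_congr_ae
  apply Eventually.of_forall
  intro t
  simp only [smul_eq_mul, map_mul, neg_neg, ← fourier_neg]

theorem coeffCLM_apply (n : ℤ) (x : L2) : coeffCLM n x = fourierCoeff (⇑x) n := by
  show fourierBasis.repr x n = _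
  rw [fourierBasis_repr]

theorem fourierCoeff_eq_inner (x : L2) (n : ℤ) :
    fourierCoeff (⇑x) n = ⟪(fourierLp 2 n : L2), x⟫ := by
  rw [← fourierBasis_repr, fourierBasis.repr_apply_apply, coe_fourierBasis]

theorem mem_H2_iff {x : L2} : x ∈ H2 ↔ ∀ n : ℤ, n < 0 → fourierCoeff (⇑x) n = 0 := by
  rw [H2, Submodule.mem_iInf]
  constructor
  · intro h n hn
    have := h ⟨n, hn⟩
    rw [LinearMap.mem_ker] at this
    rwa [← coeffCLM_apply]
  · intro h n
    rw [LinearMap.mem_ker, ContinuousLinearMap.coe_coe, coeffCLM_apply]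
    exact h n.1 n.2

theorem fourierCoeff_fourierLp (k n : ℤ) :
    fourierCoeff (⇑(fourierLp 2 k : L2)) n = if n = k then 1 else 0 := by
  rw [fourierCoeff_eq_inner]
  exact orthonormal_iff_ite.mp orthonormal_fourier n k

theorem fourierLp_mem_H2 {k : ℤ} (hk : 0 ≤ k) : (fourierLp 2 k : L2) ∈ H2 := by
  rw [mem_H2_iff]
  intro n hn
  rw [fourierCoeff_fourierLp, if_neg (by omega)]

theorem mem_H2perp_iff {x : L2} : x ∈ H2ᗮ ↔ ∀ n : ℤ, 0 ≤ n → fourierCoeff (⇑x) n = 0 := by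
  constructor
  · intro hx n hn
    rw [fourierCoeff_eq_inner]
    exact (Submodule.mem_orthogonal H2 x).mp hx _ (fourierLp_mem_H2 hn)
  · intro h
    rw [Submodule.mem_orthogonal]
    intro u hu
    rw [← fourierBasis.repr.inner_map_map u x, lp.inner_eq_tsum]
    have hz : ∀ n : ℤ, ⟪fourierBasis.repr u n, fourierBasis.repr x n⟫ = 0 := by
      intro n
      rcases lt_or_ge n 0 with hn | hn
      · have h0 : fourierBasis.repr u n = 0 := by
          rw [fourierBasis_repr]; exact mem_H2_iff.mp hu n hn
        rw [h0]; simp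
      · have h0 : fourierBasis.repr x n = 0 := by
          rw [fourierBasis_repr]; exact h n hn
        rw [h0]; simp
    simp only [hz, tsum_zero]

/-! ### Projection lemmas -/

theorem Pp_apply (x : L2) : Pp x = (H2.orthogonalProjectionOnto x : L2) := rfl

theorem Pp_mem (x : L2) : Pp x ∈ H2 := (H2.orthogonalProjectionOnto x).2

theorem Pp_eq_self {x : L2} (hx : x ∈ H2) : Pp x = x :=
  H2.starProjection_eq_self_iff.mpr hx

theorem Pp_eq_zero {x : L2} (hx : x ∈ H2ᗮ) : Pp x = 0 := by
  rw [Pp_apply, Submodule.orthogonalProjectionOnto_apply_of_mem_orthogonal hx]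
  rfl

theorem Qm_apply (x : L2) : Qm x = x - Pp x := rfl

theorem Qm_mem (x : L2) : Qm x ∈ H2ᗮ :=
  H2.sub_starProjection_mem_orthogonal x

theorem Qm_eq_self {x : L2} (hx : x ∈ H2ᗮ) : Qm x = x := by
  rw [Qm_apply, Pp_eq_zero hx, sub_zero]

theorem Qm_eq_zero {x : L2} (hx : x ∈ H2) : Qm x = 0 := by
  rw [Qm_apply, Pp_eq_self hx, sub_self]

theorem Pp_add_Qm (x : L2) : Pp x + Qm x = x := by
  rw [Qm_apply]; abel

/-! ### Adjoints -/

theorem inner_mulCL (f : Linf) (x y : L2) :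
    ⟪mulCL f x, y⟫ = ⟪x, mulCL (conjLp f) y⟫ := by
  rw [MeasureTheory.L2.inner_def, MeasureTheory.L2.inner_def]
  apply integral_congr_ae
  filter_upwards [coeFn_mulCL f x, coeFn_mulCL (conjLp f) y, coeFn_conjLp f] with t h1 h2 h3
  simp only [h1, h2, h3, RCLike.inner_apply, map_mul, RingHomCompTriple.comp_apply,
    RingHom.id_apply]
  ring

theorem inner_mulCL' (f : Linf) (x y : L2) :
    ⟪mulCL (conjLp f) x, y⟫ = ⟪x, mulCL f y⟫ := by
  rw [MeasureTheory.L2.inner_def, MeasureTheory.L2.inner_def]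
  apply integral_congr_ae
  filter_upwards [coeFn_mulCL f y, coeFn_mulCL (conjLp f) x, coeFn_conjLp f] with t h1 h2 h3
  simp only [h1, h2, h3, RCLike.inner_apply, map_mul, RingHomCompTriple.comp_apply,
    RingHom.id_apply]
  ring

theorem adjoint_mulCL (f : Linf) :
    ContinuousLinearMap.adjoint (mulCL f) = mulCL (conjLp f) := by
  symm
  rw [ContinuousLinearMap.eq_adjoint_iff]
  exact fun x y => inner_mulCL' f x y

theorem Pp_adjoint : ContinuousLinearMap.adjoint Pp = Pp :=
  (isSelfAdjoint_starProjection H2)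

theorem Qm_adjoint : ContinuousLinearMap.adjoint Qm = Qm := by
  rw [Qm, map_sub, Pp_adjoint, ContinuousLinearMap.adjoint_id]

theorem hank_adjoint (f : Linf) :
    ContinuousLinearMap.adjoint (hank f) = Pp ∘L (mulCL (conjLp f) ∘L Qm) := by
  rw [hank, ContinuousLinearMap.adjoint_comp, ContinuousLinearMap.adjoint_comp,
    adjoint_mulCL, Pp_adjoint, Qm_adjoint, ContinuousLinearMap.comp_assoc]

/-! ### Multiplication invariance -/

theorem memH2_mulCL {φ : Linf} (hφ : inclL2 φ ∈ H2) {x : L2} (hx : x ∈ H2) :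
    mulCL φ x ∈ H2 := by
  rw [mem_H2_iff]
  intro n hn
  rw [fourierCoeff_eq_inner, ← inner_mulCL']
  have hφc : ∀ k : ℤ, k < 0 → fourierCoeff (⇑φ) k = 0 := by
    intro k hk
    rw [← fourierCoeff_congr (coeFn_inclL2 φ) k]
    exact mem_H2_iff.mp hφ k hk
  have hw : mulCL (conjLp φ) (fourierLp 2 n) ∈ H2ᗮ := by
    rw [mem_H2perp_iff]
    intro m hmn
    have hae : ⇑(mulCL (conjLp φ) (fourierLp 2 n)) =ᵐ[hm]
        fun t => conj (φ t) * fourier n t := by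
      filter_upwards [coeFn_mulCL (conjLp φ) (fourierLp 2 n), coeFn_conjLp φ,
        coeFn_fourierLp 2 n] with t h1 h2 h3
      rw [h1, h2, h3]
    rw [fourierCoeff_congr hae, fourierCoeff_mul_fourier, fourierCoeff_conj,
      hφc (-(m - n)) (by omega), map_zero]
  exact (Submodule.mem_orthogonal' H2 _).mp hw x hx

theorem memPerp_mulCL {φ : Linf} (hφ : inclL2 φ ∈ H2) {w : L2} (hw : w ∈ H2ᗮ) :
    mulCL (conjLp φ) w ∈ H2ᗮ := by
  rw [Submodule.mem_orthogonal]
  intro u hu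
  rw [← inner_mulCL]
  exact (Submodule.mem_orthogonal H2 w).mp hw _ (memH2_mulCL hφ hu)

/-! ### The operator `V` -/

theorem coeFn_Vop (x : L2) :
    ⇑(Vop x) =ᵐ[hm] fun t => fourier (-1) t * conj (x t) := by
  filter_upwards [coeFn_mulCL (fourierLp ⊤ (-1)) (conjLp x), coeFn_conjLp x,
    coeFn_fourierLp ⊤ (-1)] with t h1 h2 h3
  show (mulCL (fourierLp ⊤ (-1)) (conjLp x)) t = _
  rw [h1, h2, h3]

theorem Vop_Vop (x : L2) : Vop (Vop x) = x := by
  apply Lp.ext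
  filter_upwards [coeFn_Vop (Vop x), coeFn_Vop x] with t h1 h2
  rw [h1, h2]
  simp only [map_mul, ← fourier_neg, neg_neg, RingHomCompTriple.comp_apply, RingHom.id_apply]
  rw [show fourier (-1) t * (fourier 1 t * x t) = (fourier (-1 + 1) t) * x t by
    rw [fourier_add]; ring]
  norm_num

theorem Vop_add (x y : L2) : Vop (x + y) = Vop x + Vop y := by
  apply Lp.ext
  filter_upwards [coeFn_Vop (x + y), coeFn_Vop x, coeFn_Vop y,
    Lp.coeFn_add (Vop x) (Vop y), Lp.coeFn_add x y] with t h1 h2 h3 h4 h5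
  rw [h1, h4, Pi.add_apply, h2, h3, h5]
  simp only [Pi.add_apply, map_add]
  ring

theorem Vop_sub (x y : L2) : Vop (x - y) = Vop x - Vop y := by
  apply Lp.ext
  filter_upwards [coeFn_Vop (x - y), coeFn_Vop x, coeFn_Vop y,
    Lp.coeFn_sub (Vop x) (Vop y), Lp.coeFn_sub x y] with t h1 h2 h3 h4 h5
  rw [h1, h4, Pi.sub_apply, h2, h3, h5]
  simp only [Pi.sub_apply, map_sub]
  ring

theorem Vop_mulCL (φ : Linf) (x : L2) :
    Vop (mulCL φ x) = mulCL (conjLp φ) (Vop x) := by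
  apply Lp.ext
  filter_upwards [coeFn_Vop (mulCL φ x), coeFn_mulCL φ x,
    coeFn_mulCL (conjLp φ) (Vop x), coeFn_conjLp φ, coeFn_Vop x] with t h1 h2 h3 h4 h5
  rw [h1, h2, h3, h4, h5]
  simp only [map_mul]
  ring

theorem fourierCoeff_Vop (x : L2) (n : ℤ) :
    fourierCoeff (⇑(Vop x)) n = conj (fourierCoeff (⇑x) (-1 - n)) := by
  rw [fourierCoeff_congr (coeFn_Vop x),
    fourierCoeff_congr (f := fun t => fourier (-1) t * conj (x t))
      (g := fun t => conj (x t) * fourier (-1) t)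
      (Eventually.of_forall fun t => mul_comm _ _),
    fourierCoeff_mul_fourier, fourierCoeff_conj]
  congr 1
  ring_nf

theorem Vop_mem_perp {x : L2} (hx : x ∈ H2) : Vop x ∈ H2ᗮ := by
  rw [mem_H2perp_iff]
  intro n hn
  rw [fourierCoeff_Vop, mem_H2_iff.mp hx (-1 - n) (by omega), map_zero]

theorem Vop_mem_H2 {x : L2} (hx : x ∈ H2ᗮ) : Vop x ∈ H2 := by
  rw [mem_H2_iff]
  intro n hn
  rw [fourierCoeff_Vop, mem_H2perp_iff.mp hx (-1 - n) (by omega), map_zero]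

theorem Pp_Vop (x : L2) : Pp (Vop x) = Vop (Qm x) := by
  conv_lhs => rw [← Pp_add_Qm x]
  rw [Vop_add, map_add, Pp_eq_zero (Vop_mem_perp (Pp_mem x)),
    Pp_eq_self (Vop_mem_H2 (Qm_mem x)), zero_add]

theorem Qm_Vop (x : L2) : Qm (Vop x) = Vop (Pp x) := by
  conv_lhs => rw [← Pp_add_Qm x]
  rw [Vop_add, map_add, Qm_eq_zero (Vop_mem_H2 (Qm_mem x)),
    Qm_eq_self (Vop_mem_perp (Pp_mem x)), add_zero]

/-! ### Symbol algebra -/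

theorem mulCL_mulInf (a b : Linf) (x : L2) :
    mulCL (mulInf a b) x = mulCL a (mulCL b x) := by
  apply Lp.ext
  filter_upwards [coeFn_mulCL (mulInf a b) x, coeFn_mulInf a b,
    coeFn_mulCL a (mulCL b x), coeFn_mulCL b x] with t h1 h2 h3 h4
  rw [h1, h2, h3, h4]
  ring

theorem mulCL_mulInf' (a b : Linf) (x : L2) :
    mulCL (mulInf a b) x = mulCL b (mulCL a x) := by
  apply Lp.ext
  filter_upwards [coeFn_mulCL (mulInf a b) x, coeFn_mulInf a b,
    coeFn_mulCL b (mulCL a x), coeFn_mulCL a x] with t h1 h2 h3 h4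
  rw [h1, h2, h3, h4]
  ring

theorem mulCL_conj_conj (φ : Linf) (x : L2) :
    mulCL (conjLp (conjLp φ)) x = mulCL φ x := by
  apply Lp.ext
  filter_upwards [coeFn_mulCL (conjLp (conjLp φ)) x, coeFn_conjLp (conjLp φ),
    coeFn_conjLp φ, coeFn_mulCL φ x] with t h1 h2 h3 h4
  rw [h1, h2, h3, h4]
  simp

theorem mulCL_conj_mulInf_conj (a b : Linf) (x : L2) :
    mulCL (conjLp (mulInf (conjLp a) b)) x = mulCL a (mulCL (conjLp b) x) := by
  apply Lp.ext
  filter_upwards [coeFn_mulCL (conjLp (mulInf (conjLp a) b)) x,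
    coeFn_conjLp (mulInf (conjLp a) b), coeFn_mulInf (conjLp a) b, coeFn_conjLp a,
    coeFn_mulCL a (mulCL (conjLp b) x), coeFn_mulCL (conjLp b) x, coeFn_conjLp b]
    with t h1 h2 h3 h4 h5 h6 h7
  rw [h1, h2, h3, h4, h5, h6, h7]
  simp only [map_mul, RingHomCompTriple.comp_apply, RingHom.id_apply]
  ring

theorem mulCL_symbol_add (a b : Linf) (x : L2) :
    mulCL (a + b) x = mulCL a x + mulCL b x := by
  apply Lp.ext
  filter_upwards [coeFn_mulCL (a + b) x, Lp.coeFn_add a b, coeFn_mulCL a x,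
    coeFn_mulCL b x, Lp.coeFn_add (mulCL a x) (mulCL b x)] with t h1 h2 h3 h4 h5
  rw [h1, h2, h5]
  simp only [Pi.add_apply]
  rw [h3, h4]
  ring

/-! ### Application formulas -/

theorem hank_apply_mem (φ : Linf) {x : L2} (hx : x ∈ H2) :
    hank φ x = Qm (mulCL φ x) := by
  rw [hank, ContinuousLinearMap.comp_apply, ContinuousLinearMap.comp_apply, Pp_eq_self hx]

theorem adj_hank_Vop (f : Linf) {h : L2} (hh : h ∈ H2) :
    ContinuousLinearMap.adjoint (hank f) (Vop h) = Vop (Qm (mulCL f h)) := by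
  rw [hank_adjoint, ContinuousLinearMap.comp_apply, ContinuousLinearMap.comp_apply,
    Qm_eq_self (Vop_mem_perp hh), ← Vop_mulCL, Pp_Vop]

theorem adj_hank_perp (φ : Linf) {w : L2} (hw : w ∈ H2ᗮ) :
    ContinuousLinearMap.adjoint (hank φ) w = Pp (mulCL (conjLp φ) w) := by
  rw [hank_adjoint, ContinuousLinearMap.comp_apply, ContinuousLinearMap.comp_apply,
    Qm_eq_self hw]

theorem hank_conj_Vop (φ : Linf) {w : L2} (hw : w ∈ H2ᗮ) :
    hank (conjLp φ) (Vop w) = Vop (Pp (mulCL φ w)) := by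
  rw [hank, ContinuousLinearMap.comp_apply, ContinuousLinearMap.comp_apply,
    Pp_eq_self (Vop_mem_H2 hw), ← Vop_mulCL, Qm_Vop]

theorem toep_conj_Vop (φ : Linf) {w : L2} (hw : w ∈ H2ᗮ) :
    toep (conjLp φ) (Vop w) = Vop (Qm (mulCL φ w)) := by
  rw [toep, ContinuousLinearMap.comp_apply, ContinuousLinearMap.comp_apply,
    Pp_eq_self (Vop_mem_H2 hw), ← Vop_mulCL, Pp_Vop]

theorem Qm_mulCL_Qm {φ : Linf} (hφ : inclL2 φ ∈ H2) (x : L2) :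
    Qm (mulCL φ (Qm x)) = Qm (mulCL φ x) := by
  conv_rhs => rw [← Pp_add_Qm x]
  rw [map_add (mulCL φ), map_add Qm, Qm_eq_zero (memH2_mulCL hφ (Pp_mem x)), zero_add]

/-- For a non-constant inner function `θ`, `f ∈ L^∞` and
`g = g₁ + conj g₂` with `g₁, g₂ ∈ K_θ ∩ L^∞`, as operators on `H²`:
`V⁻¹ (H_{θ̄} T_{ḡ} H_f* − H_{ḡ} H_{θf}*) V = H_{θ̄}* H_{fg₁} + H_{θ̄g₂}* H_f − H_{ḡ₁}* H_{θf}`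
(recall `V = V⁻¹`). -/
theorem statement_6 (θ : Linf) (hθ : IsInner θ) (hθnc : ¬ IsConst θ) (f : Linf)
    (g₁ g₂ : Linf) (hg₁ : inclL2 g₁ ∈ Ktheta θ) (hg₂ : inclL2 g₂ ∈ Ktheta θ)
    (g : Linf) (hg : g = g₁ + conjLp g₂) :
    ∀ h : L2, h ∈ H2 →
      Vop ((hank (conjLp θ) ∘L toep (conjLp g) ∘L ContinuousLinearMap.adjoint (hank f)
            - hank (conjLp g) ∘L ContinuousLinearMap.adjoint (hank (mulInf θ f))) (Vop h))
        = (ContinuousLinearMap.adjoint (hank (conjLp θ)) ∘L hank (mulInf f g₁)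
            + ContinuousLinearMap.adjoint (hank (mulInf (conjLp θ) g₂)) ∘L hank f
            - ContinuousLinearMap.adjoint (hank (conjLp g₁)) ∘L hank (mulInf θ f)) h := by
  intro h hh
  have hg1H : inclL2 g₁ ∈ H2 := hg₁.1
  have hg2H : inclL2 g₂ ∈ H2 := hg₂.1
  have hu_perp : Qm (mulCL f h) ∈ H2ᗮ := Qm_mem _
  have hu'_perp : Qm (mulCL (mulInf θ f) h) ∈ H2ᗮ := Qm_mem _
  rw [ContinuousLinearMap.sub_apply, ContinuousLinearMap.sub_apply,
    ContinuousLinearMap.add_apply, ContinuousLinearMap.comp_apply,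
    ContinuousLinearMap.comp_apply, ContinuousLinearMap.comp_apply,
    ContinuousLinearMap.comp_apply, ContinuousLinearMap.comp_apply,
    ContinuousLinearMap.comp_apply]
  rw [adj_hank_Vop f hh, adj_hank_Vop (mulInf θ f) hh,
    toep_conj_Vop g (Qm_mem _), hank_conj_Vop θ (Qm_mem _), hank_conj_Vop g (Qm_mem _),
    ← Vop_sub, Vop_Vop]
  rw [hank_apply_mem (mulInf f g₁) hh, hank_apply_mem f hh, hank_apply_mem (mulInf θ f) hh,
    adj_hank_perp (conjLp θ) (Qm_mem _), mulCL_conj_conj θ,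
    adj_hank_perp (mulInf (conjLp θ) g₂) (Qm_mem _), mulCL_conj_mulInf_conj θ g₂,
    adj_hank_perp (conjLp g₁) (Qm_mem _), mulCL_conj_conj g₁]
  rw [hg, mulCL_symbol_add g₁ (conjLp g₂) (Qm (mulCL f h)),
    mulCL_symbol_add g₁ (conjLp g₂) (Qm (mulCL (mulInf θ f) h)),
    map_add Qm, Qm_eq_self (memPerp_mulCL hg2H hu_perp),
    map_add (mulCL θ), map_add Pp,
    map_add Pp (mulCL g₁ (Qm (mulCL (mulInf θ f) h)))
      (mulCL (conjLp g₂) (Qm (mulCL (mulInf θ f) h))),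
    Pp_eq_zero (memPerp_mulCL hg2H hu'_perp), add_zero,
    mulCL_mulInf' f g₁ h, ← Qm_mulCL_Qm hg1H (mulCL f h)]

end HTTO
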